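/- Let n ≥ 2, l > 0, and let φ : [−l, l] → ℝ be a positive C² function satisfying −2(n−1)·φ″(t)/φ(t) − (n−1)(n−2)·(φ′(t)/φ(t))² ≥ n(n−1) for all t ∈ [−l, l]. Then 2l < 2π/n. -/

import Mathlib

/-!
With `f = φ'/φ` one has `f' = φ''/φ - f²`, and dividing the curvature bound by `n - 1` turns it
into the Riccati inequality `f' ≤ -(n/2)(1 + f²)`. Hence `arctan f + (n/2) t` is nonincreasing on
`[-l, l]`, so `arctan f` drops by at least `(n/2)·2l`; since `arctan` takes values in
`(-π/2, π/2)`, this forces `n l < π`.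
-/

open Set Real

theorem antitoneOn_arctan_add_mul {f f' : ℝ → ℝ} {c a b : ℝ}
    (hf : ∀ t ∈ Icc a b, HasDerivAt f (f' t) t)
    (hric : ∀ t ∈ Icc a b, f' t ≤ -c * (1 + f t ^ 2)) :
    AntitoneOn (fun t => arctan (f t) + c * t) (Icc a b) := by
  have hderiv : ∀ t ∈ Icc a b,
      HasDerivAt (fun t => arctan (f t) + c * t) (f' t / (1 + f t ^ 2) + c) t := fun t ht =>
    ((hf t ht).arctan.add ((hasDerivAt_id t).const_mul c)).congr_deriv (by ring)
  refine antitoneOn_of_hasDerivWithinAt_nonpos (convex_Icc a b)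
    (fun t ht => (hderiv t ht).continuousAt.continuousWithinAt)
    (fun t ht => (hderiv t (interior_subset ht)).hasDerivWithinAt) fun t ht => ?_
  have hpos : 0 < 1 + f t ^ 2 := by positivity
  rw [div_add' _ _ _ hpos.ne', div_nonpos_iff]
  exact Or.inr ⟨by linarith [hric t (interior_subset ht)], hpos.le⟩

theorem mul_sub_lt_pi_of_riccati {f f' : ℝ → ℝ} {c a b : ℝ} (hab : a ≤ b)
    (hf : ∀ t ∈ Icc a b, HasDerivAt f (f' t) t)
    (hric : ∀ t ∈ Icc a b, f' t ≤ -c * (1 + f t ^ 2)) :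
    c * (b - a) < π := by
  have hmono := antitoneOn_arctan_add_mul hf hric (left_mem_Icc.2 hab) (right_mem_Icc.2 hab) hab
  linarith [arctan_lt_pi_div_two (f a), neg_pi_div_two_lt_arctan (f b)]

theorem hasDerivAt_logDeriv {φ φ' : ℝ → ℝ} {φ'' t : ℝ} (h1 : HasDerivAt φ (φ' t) t)
    (h2 : HasDerivAt φ' φ'' t) (hφ : φ t ≠ 0) :
    HasDerivAt (fun s => φ' s / φ s) (φ'' / φ t - (φ' t / φ t) ^ 2) t :=
  (h2.div h1 hφ).congr_deriv (by field_simp)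

theorem riccati_of_scalarCurvature_ge {n p q : ℝ} (hn : 1 < n)
    (hsc : n * (n - 1) ≤ -2 * (n - 1) * p - (n - 1) * (n - 2) * q ^ 2) :
    p - q ^ 2 ≤ -(n / 2) * (1 + q ^ 2) := by
  have hsc' : (n - 1) * n ≤ (n - 1) * (-2 * p - (n - 2) * q ^ 2) := by linarith
  have := le_of_mul_le_mul_left hsc' (by linarith)
  linarith

theorem warped_product_width_general (n : ℕ) (hn : 2 ≤ n) (l : ℝ) (hl : 0 < l)
    (φ φ' φ'' : ℝ → ℝ)
    (hpos : ∀ t ∈ Set.Icc (-l) l, 0 < φ t)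
    (h1 : ∀ t ∈ Set.Icc (-l) l, HasDerivAt φ (φ' t) t)
    (h2 : ∀ t ∈ Set.Icc (-l) l, HasDerivAt φ' (φ'' t) t)
    (hsc : ∀ t ∈ Set.Icc (-l) l,
      (n : ℝ) * ((n : ℝ) - 1) ≤
        -2 * ((n : ℝ) - 1) * (φ'' t / φ t) -
          ((n : ℝ) - 1) * ((n : ℝ) - 2) * (φ' t / φ t) ^ 2) :
    2 * l < 2 * Real.pi / n := by
  have hn' : (1 : ℝ) < n := by exact_mod_cast hn
  have hwidth : (n / 2 : ℝ) * (l - -l) < π :=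
    mul_sub_lt_pi_of_riccati (by linarith)
      (fun t ht => hasDerivAt_logDeriv (h1 t ht) (h2 t ht) (hpos t ht).ne')
      (fun t ht => riccati_of_scalarCurvature_ge hn' (hsc t ht))
  rw [lt_div_iff₀ (by linarith)]
  linarith

/-- Warped product width bound: a positive C² function φ on `[-l, l]` with
`-2(n-1) φ''/φ - (n-1)(n-2)(φ'/φ)² ≥ n(n-1)` forces `2l < 2π/n`. -/
theorem warped_product_width (n : ℕ) (hn : 2 ≤ n) (l : ℝ) (hl : 0 < l)
    (φ φ' φ'' : ℝ → ℝ)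
    (hpos : ∀ t ∈ Set.Icc (-l) l, 0 < φ t)
    (h1 : ∀ t ∈ Set.Icc (-l) l, HasDerivAt φ (φ' t) t)
    (h2 : ∀ t ∈ Set.Icc (-l) l, HasDerivAt φ' (φ'' t) t)
    (hcont : ContinuousOn φ'' (Set.Icc (-l) l))
    (hsc : ∀ t ∈ Set.Icc (-l) l,
      (n : ℝ) * ((n : ℝ) - 1) ≤
        -2 * ((n : ℝ) - 1) * (φ'' t / φ t) -
          ((n : ℝ) - 1) * ((n : ℝ) - 2) * (φ' t / φ t) ^ 2) :
    2 * l < 2 * Real.pi / n :=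
  warped_product_width_general n hn l hl φ φ' φ'' hpos h1 h2 hsc
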